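/- arXiv:0809.1895 — 7 statements merged into one kernel-verified Lean document; each statement's English description precedes it below -/
import Mathlib

section
/- Let G = (U ∪ V, E) be a bipartite graph with an arrival order on U in which every keyword has degree at least 2, and let f be a maximum matching of G of size k. Then there exists a second-price matching of G of value at least k/2. Hence the maximum second-price matching has value at least half the size of the maximum bipartite matching, i.e., the ReverseMatch algorithm is a 2-approximation. -/
/-- A second-price matching of a bipartite graph with keywords `Fin m` (arriving
in index order), bidders `B`, and adjacency `A`. -/
def IsSecondPriceMatching {m : ℕ} {B : Type*} (A : Fin m → B → Prop)
    (S : Finset (Fin m)) (g w : Fin m → B) : Prop :=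
  (∀ u ∈ S, A u (g u) ∧ A u (w u) ∧ g u ≠ w u) ∧
  (∀ u ∈ S, ∀ u' ∈ S, u ≠ u' → g u ≠ g u') ∧
  (∀ u ∈ S, ∀ u' ∈ S, u' < u → g u' ≠ g u ∧ g u' ≠ w u)

lemma aux_spm {m : ℕ} {B : Type*} (f s : Fin m → B) :
    ∀ T : Finset (Fin m), (∀ u ∈ T, ∀ u' ∈ T, u ≠ u' → f u ≠ f u') →
    ∃ S : Finset (Fin m), S ⊆ T ∧ T.card ≤ 2 * S.card ∧
      ∀ u ∈ S, ∀ u' ∈ S, u' < u → s u ≠ f u' := by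
  intro T
  induction T using Finset.strongInduction with
  | _ T ih =>
    intro hinj
    rcases T.eq_empty_or_nonempty with rfl | hne
    · exact ⟨∅, by simp⟩
    · set u := T.max' hne with hu
      have humem : u ∈ T := T.max'_mem hne
      have hmax : ∀ a ∈ T, a ≤ u := fun a ha => T.le_max' a ha
      by_cases hc : ∃ p ∈ T, p < u ∧ s u = f p
      · obtain ⟨p, hpT, hpu, hsp⟩ := hc
        have hpne : p ≠ u := ne_of_lt hpu
        set T' := (T.erase u).erase p with hT'
        have hsub : T' ⊂ T :=
          lt_of_le_of_lt (Finset.erase_subset p (T.erase u)) (Finset.erase_ssubset humem)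
        obtain ⟨S', hS'T, hS'card, hS'prop⟩ :=
          ih T' hsub (fun a ha b hb hab => hinj a (hsub.subset ha) b (hsub.subset hb) hab)
        have huS' : u ∉ S' := fun h => by
          have := hS'T h
          simp [hT', Finset.mem_erase] at this
        refine ⟨insert u S', ?_, ?_, ?_⟩
        · intro a ha
          rcases Finset.mem_insert.mp ha with rfl | ha
          · exact humem
          · exact hsub.subset (hS'T ha)
        · have h1 : (T.erase u).card + 1 = T.card := Finset.card_erase_add_one humem
          have hpmem : p ∈ T.erase u := Finset.mem_erase.mpr ⟨hpne, hpT⟩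
          have h2 : T'.card + 1 = (T.erase u).card := Finset.card_erase_add_one hpmem
          rw [Finset.card_insert_of_notMem huS']
          omega
        · intro a ha b hb hba
          rcases Finset.mem_insert.mp ha with rfl | ha
          · have hbS' : b ∈ S' := by
              rcases Finset.mem_insert.mp hb with rfl | hb
              · exact absurd hba (lt_irrefl _)
              · exact hb
            have hbT' : b ∈ T' := hS'T hbS'
            have hbp : p ≠ b := fun h => (Finset.mem_erase.mp hbT').1 h.symm
            rw [hsp]
            exact hinj p hpT b (hsub.subset hbT') hbp
          · rcases Finset.mem_insert.mp hb with rfl | hb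
            · exact absurd (lt_of_lt_of_le hba (hmax a (hsub.subset (hS'T ha))))
                (lt_irrefl _)
            · exact hS'prop a ha b hb hba
      · set T' := T.erase u with hT'
        have hsub : T' ⊂ T := Finset.erase_ssubset humem
        obtain ⟨S', hS'T, hS'card, hS'prop⟩ :=
          ih T' hsub (fun a ha b hb hab => hinj a (hsub.subset ha) b (hsub.subset hb) hab)
        have huS' : u ∉ S' := fun h => (Finset.mem_erase.mp (hS'T h)).1 rfl
        refine ⟨insert u S', ?_, ?_, ?_⟩
        · intro a ha
          rcases Finset.mem_insert.mp ha with rfl | ha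
          · exact humem
          · exact hsub.subset (hS'T ha)
        · have h1 : T'.card + 1 = T.card := Finset.card_erase_add_one humem
          rw [Finset.card_insert_of_notMem huS']
          omega
        · intro a ha b hb hba
          rcases Finset.mem_insert.mp ha with rfl | ha
          · have hbS' : b ∈ S' := by
              rcases Finset.mem_insert.mp hb with rfl | hb
              · exact absurd hba (lt_irrefl _)
              · exact hb
            intro h
            exact hc ⟨b, hsub.subset (hS'T hbS'), hba, h⟩
          · rcases Finset.mem_insert.mp hb with rfl | hb
            · exact absurd (lt_of_lt_of_le hba (hmax a (hsub.subset (hS'T ha))))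
                (lt_irrefl _)
            · exact hS'prop a ha b hb hba

/-- if every keyword has degree at least 2 and `f` (with domain `T`) is a
maximum matching of size `k`, then there exists a second-price matching of value at
least `k/2` (ReverseMatch is a 2-approximation). -/
theorem stmt1 {m : ℕ} {B : Type*} (A : Fin m → B → Prop)
    (hdeg : ∀ u : Fin m, ∃ v v' : B, v ≠ v' ∧ A u v ∧ A u v')
    (T : Finset (Fin m)) (f : Fin m → B) (k : ℕ)
    (hadj : ∀ u ∈ T, A u (f u))
    (hinj : ∀ u ∈ T, ∀ u' ∈ T, u ≠ u' → f u ≠ f u')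
    (hcard : T.card = k)
    (hmaximum : ∀ (T' : Finset (Fin m)) (f' : Fin m → B),
      (∀ u ∈ T', A u (f' u)) → (∀ u ∈ T', ∀ u' ∈ T', u ≠ u' → f' u ≠ f' u') →
      T'.card ≤ k) :
    ∃ (S : Finset (Fin m)) (g w : Fin m → B),
      IsSecondPriceMatching A S g w ∧ k ≤ 2 * S.card := by
  have hs : ∀ u : Fin m, ∃ x, A u x ∧ x ≠ f u := by
    intro u
    obtain ⟨v, v', hne, h1, h2⟩ := hdeg u
    by_cases h : v = f u
    · exact ⟨v', h2, fun hh => hne (h.trans hh.symm)⟩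
    · exact ⟨v, h1, h⟩
  choose s hsA hsne using hs
  obtain ⟨S, hST, hcardS, hprop⟩ := aux_spm f s T hinj
  refine ⟨S, f, s, ⟨?_, ?_, ?_⟩, ?_⟩
  · exact fun u hu => ⟨hadj u (hST hu), hsA u, (hsne u).symm⟩
  · exact fun u hu u' hu' hne => hinj u (hST hu) u' (hST hu') hne
  · intro u hu u' hu' hlt
    exact ⟨hinj u' (hST hu') u (hST hu) (ne_of_lt hlt),
      fun h => hprop u hu u' hu' hlt h.symm⟩
  · omega
end

section
/- Let G be a graph and let f(G) be the Second-Price Matching instance constructed from G as follows: for each edge e of G there is an edge keyword bid on by its two endpoint vertex-bidders and a private bidder x_e; for each vertex v there is a gadget with keywords h_v, l_v (arriving before all edge keywords, with h_v before l_v) and bidders y_v, z_v, where v and y_v bid on h_v, and y_v and z_v bid on l_v. Then the maximum second-price matching of f(G) has value exactly 2|V(G)| + |E(G)| − τ(G), where τ(G) is the minimum vertex cover number of G. -/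
/-- A second-price matching for keywords `K` with arrival (strict) order `lt`,
bidders `B`, and adjacency `A`. -/
def IsSPM {K B : Type*} (lt : K → K → Prop) (A : K → B → Prop)
    (S : Finset K) (g w : K → B) : Prop :=
  (∀ u ∈ S, A u (g u) ∧ A u (w u) ∧ g u ≠ w u) ∧
  (∀ u ∈ S, ∀ u' ∈ S, u ≠ u' → g u ≠ g u') ∧
  (∀ u ∈ S, ∀ u' ∈ S, lt u' u → g u' ≠ g u ∧ g u' ≠ w u)

variable {n : ℕ}

/-- Keywords of the instance `f(G)`: `Sum.inl v` is the gadget keyword `h_v`,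
`Sum.inr (Sum.inl v)` is the gadget keyword `l_v`, and `Sum.inr (Sum.inr e)` is the
edge keyword for `e ∈ E(G)`. -/
abbrev GadgetKeyword (G : SimpleGraph (Fin n)) [DecidableRel G.Adj] :=
  Fin n ⊕ (Fin n ⊕ {e // e ∈ G.edgeFinset})

/-- Bidders of the instance `f(G)`: `Sum.inl v` is the vertex bidder `v`,
`Sum.inr (Sum.inl e)` is the private bidder `x_e`, and `Sum.inr (Sum.inr (Sum.inl v))`,
`Sum.inr (Sum.inr (Sum.inr v))` are the gadget bidders `y_v`, `z_v`. -/
abbrev GadgetBidder (G : SimpleGraph (Fin n)) [DecidableRel G.Adj] :=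
  Fin n ⊕ ({e // e ∈ G.edgeFinset} ⊕ (Fin n ⊕ Fin n))

/-- Who bids on which keyword in `f(G)`: `v` and `y_v` bid on `h_v`; `y_v` and `z_v`
bid on `l_v`; the two endpoints of `e` and `x_e` bid on the edge keyword `e`. -/
def gadgetAdj (G : SimpleGraph (Fin n)) [DecidableRel G.Adj] :
    GadgetKeyword G → GadgetBidder G → Prop
  | Sum.inl v => fun b =>
      b = Sum.inl v ∨ b = Sum.inr (Sum.inr (Sum.inl v))
  | Sum.inr (Sum.inl v) => fun b =>
      b = Sum.inr (Sum.inr (Sum.inl v)) ∨ b = Sum.inr (Sum.inr (Sum.inr v))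
  | Sum.inr (Sum.inr e) => fun b =>
      (∃ v : Fin n, b = Sum.inl v ∧ v ∈ (e : Sym2 (Fin n))) ∨ b = Sum.inr (Sum.inl e)

/-! From a vertex cover `C`, sell every `l_v` to `z_v` (witness `y_v`), every edge keyword to its
private bidder `x_e` (witness an endpoint in `C`), and `h_v` to `v` (witness `y_v`) for `v ∉ C`:
no sold bidder is ever a witness, so this is a second-price matching of size `2n + |E| - |C|`.
Conversely, call `v` doubly matched if both `h_v` and `l_v` are sold. Then `h_v` went to `v`, so
`v` is gone before any edge keyword arrives and every sold edge has an endpoint that is not doubly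
matched. The vertices that are not doubly matched, together with one endpoint of each unsold edge,
form a vertex cover of size at most `2n + |E| - |S|`. -/

open Finset

theorem isSPM_of_injOn_of_disjoint {K B : Type*} {lt : K → K → Prop} [Std.Irrefl lt]
    {A : K → B → Prop} {S : Finset K} {g w : K → B}
    (hA : ∀ u ∈ S, A u (g u) ∧ A u (w u)) (hg : Set.InjOn g S)
    (hgw : ∀ u ∈ S, ∀ u' ∈ S, g u' ≠ w u) : IsSPM lt A S g w := by
  refine ⟨fun u hu => ⟨(hA u hu).1, (hA u hu).2, hgw u hu u hu⟩,
    fun u hu u' hu' hne h => hne (hg hu hu' h), fun u hu u' hu' hlt => ⟨?_, hgw u hu u' hu'⟩⟩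
  rintro h
  rw [hg hu' hu h] at hlt
  exact irrefl u hlt

section Gadget

variable {G : SimpleGraph (Fin n)} [DecidableRel G.Adj]

theorem exists_isSPM_card_add_card_eq (lt : GadgetKeyword G → GadgetKeyword G → Prop)
    [Std.Irrefl lt] {C : Finset (Fin n)} (hC : ∀ e ∈ G.edgeFinset, ∃ v ∈ C, v ∈ e) :
    ∃ (S : Finset (GadgetKeyword G)) (g w : GadgetKeyword G → GadgetBidder G),
      IsSPM lt (gadgetAdj G) S g w ∧ #S + #C = 2 * n + #G.edgeFinset := by
  choose c hcC hce using fun e : {e // e ∈ G.edgeFinset} => hC e.1 e.2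
  refine ⟨Cᶜ.disjSum univ,
    Sum.elim Sum.inl (Sum.elim (fun v => .inr (.inr (.inr v))) (fun e => .inr (.inl e))),
    Sum.elim (fun v => .inr (.inr (.inl v)))
      (Sum.elim (fun v => .inr (.inr (.inl v))) (fun e => .inl (c e))),
    isSPM_of_injOn_of_disjoint ?_ ?_ ?_, ?_⟩
  · rintro (v | v | e) - <;> simp [gadgetAdj, hce]
  · rintro (v | v | e) - (v' | v' | e') - <;> simp
  · rintro (v | v | e) - (v' | v' | e') hu'
    all_goals simp
    rw [inl_mem_disjSum, mem_compl] at hu'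
    exact fun h => hu' (h ▸ hcC e)
  · have hCn : #C ≤ n := by simpa using card_le_univ C
    simp only [card_disjSum, card_compl, card_univ, Fintype.card_sum, Fintype.card_fin,
      Fintype.card_coe]
    omega

variable {lt : GadgetKeyword G → GadgetKeyword G → Prop} {S : Finset (GadgetKeyword G)}
  {g w : GadgetKeyword G → GadgetBidder G}

/-- `l_v` needs `y_v` and `z_v` both unused, so the earlier `h_v` cannot have taken `y_v`. -/
theorem IsSPM.eq_inl_of_gadget_mem (hS : IsSPM lt (gadgetAdj G) S g w) {v : Fin n}
    (horder : lt (.inl v) (.inr (.inl v))) (hh : .inl v ∈ S) (hl : .inr (.inl v) ∈ S) :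
    g (.inl v) = .inl v := by
  obtain ⟨hadj, -, hord⟩ := hS
  obtain ⟨hgl, hwl, hgwl⟩ := hadj _ hl
  obtain ⟨hgh, -, -⟩ := hadj _ hh
  obtain ⟨hne_g, hne_w⟩ := hord _ hl _ hh horder
  simp only [gadgetAdj] at hgl hwl hgh
  rcases hgh with hgh | hgh
  · exact hgh
  · rcases hgl with h | h <;> rcases hwl with h' | h' <;> simp_all

/-- An endpoint with a fully matched gadget was already sold at `h_c`, so it can be neither buyer
nor witness, while the edge needs two distinct bidders among its endpoints and `x_e`. -/
theorem IsSPM.exists_mem_edge_gadget_not_mem (hS : IsSPM lt (gadgetAdj G) S g w)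
    (horder1 : ∀ v : Fin n, lt (.inl v) (.inr (.inl v)))
    {e : {e // e ∈ G.edgeFinset}} (horder2 : ∀ v : Fin n, lt (.inl v) (.inr (.inr e)))
    (he : .inr (.inr e) ∈ S) : ∃ c ∈ (e : Sym2 (Fin n)), ¬(.inl c ∈ S ∧ .inr (.inl c) ∈ S) := by
  have hsold : ∀ c, .inl c ∈ S → .inr (.inl c) ∈ S →
      g (.inr (.inr e)) ≠ .inl c ∧ w (.inr (.inr e)) ≠ .inl c := by
    intro c hh hl
    have := hS.2.2 _ he _ hh (horder2 c)
    rw [hS.eq_inl_of_gadget_mem (horder1 c) hh hl] at this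
    exact ⟨this.1.symm, this.2.symm⟩
  obtain ⟨hg, hw, hgw⟩ := hS.1 _ he
  simp only [gadgetAdj] at hg hw
  rcases hg with ⟨c, hgc, hce⟩ | hg
  · exact ⟨c, hce, fun ⟨hh, hl⟩ => (hsold c hh hl).1 hgc⟩
  rcases hw with ⟨c, hwc, hce⟩ | hw
  · exact ⟨c, hce, fun ⟨hh, hl⟩ => (hsold c hh hl).2 hwc⟩
  · exact absurd (hg.trans hw.symm) hgw

theorem IsSPM.exists_cover_card_add_card_le (hS : IsSPM lt (gadgetAdj G) S g w)
    (horder1 : ∀ v : Fin n, lt (.inl v) (.inr (.inl v)))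
    (horder2 : ∀ (v : Fin n) (e : {e // e ∈ G.edgeFinset}), lt (.inl v) (.inr (.inr e))) :
    ∃ C : Finset (Fin n), (∀ e ∈ G.edgeFinset, ∃ v ∈ C, v ∈ e) ∧
      #S + #C ≤ 2 * n + #G.edgeFinset := by
  set D := S.toLeft ∩ S.toRight.toLeft
  set U := S.toRight.toRightᶜ
  refine ⟨Dᶜ ∪ U.image fun e : {e // e ∈ G.edgeFinset} => e.1.out.1, fun e he => ?_, ?_⟩
  · by_cases heS : .inr (.inr ⟨e, he⟩) ∈ S
    · obtain ⟨c, hce, hc⟩ := hS.exists_mem_edge_gadget_not_mem horder1 (horder2 · _) heS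
      refine ⟨c, mem_union_left _ ?_, hce⟩
      rwa [mem_compl, mem_inter, mem_toLeft, mem_toLeft, mem_toRight]
    · exact ⟨_, mem_union_right _ (mem_image_of_mem _ (by simpa [U] using heS)),
        Sym2.out_fst_mem e⟩
  · have hS_card : #S = #S.toLeft + #S.toRight.toLeft + #S.toRight.toRight := by
      rw [add_assoc, card_toLeft_add_card_toRight, card_toLeft_add_card_toRight]
    have hD : #D + #(S.toLeft ∪ S.toRight.toLeft) = #S.toLeft + #S.toRight.toLeft :=
      card_inter_add_card_union _ _
    have hunion : #(S.toLeft ∪ S.toRight.toLeft) ≤ n := by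
      simpa using card_le_univ (S.toLeft ∪ S.toRight.toLeft)
    have hU : #S.toRight.toRight + #U = #G.edgeFinset := by
      rw [card_add_card_compl, Fintype.card_coe]
    have hDc : #D + #Dᶜ = n := (card_add_card_compl D).trans (Fintype.card_fin n)
    have hC : #(Dᶜ ∪ U.image fun e : {e // e ∈ G.edgeFinset} => e.1.out.1) ≤ #Dᶜ + #U :=
      (card_union_le _ _).trans (add_le_add le_rfl card_image_le)
    omega

end Gadget

/-- for any arrival order on the keywords of `f(G)` in which every `h_v`
precedes `l_v` and every gadget keyword precedes every edge keyword, the maximum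
second-price matching of `f(G)` has value exactly `2|V(G)| + |E(G)| - τ(G)`. -/
theorem stmt2 (G : SimpleGraph (Fin n)) [DecidableRel G.Adj]
    (lt : GadgetKeyword G → GadgetKeyword G → Prop) [IsStrictTotalOrder _ lt]
    (horder1 : ∀ v : Fin n, lt (Sum.inl v) (Sum.inr (Sum.inl v)))
    (horder2 : ∀ (u : Fin n ⊕ Fin n) (e : {e // e ∈ G.edgeFinset}),
      lt (Sum.elim Sum.inl (fun v => Sum.inr (Sum.inl v)) u) (Sum.inr (Sum.inr e)))
    (τ : ℕ)
    (hτ : IsLeast {k : ℕ | ∃ C : Finset (Fin n), C.card = k ∧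
      ∀ e ∈ G.edgeFinset, ∃ v ∈ C, v ∈ e} τ) :
    IsGreatest {val : ℕ | ∃ (S : Finset (GadgetKeyword G))
        (g w : GadgetKeyword G → GadgetBidder G),
        IsSPM lt (gadgetAdj G) S g w ∧ S.card = val}
      (2 * n + G.edgeFinset.card - τ) := by
  obtain ⟨⟨C, rfl, hC⟩, hmin⟩ := hτ
  refine ⟨?_, ?_⟩
  · obtain ⟨S, g, w, hS, hcard⟩ := exists_isSPM_card_add_card_eq lt hC
    exact ⟨S, g, w, hS, by omega⟩
  · rintro _ ⟨S, g, w, hS, rfl⟩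
    obtain ⟨C', hC', hcard⟩ := hS.exists_cover_card_add_card_le horder1 (fun v => horder2 (.inl v))
    have := hmin ⟨C', rfl, hC'⟩
    omega
end

section
/- Consider the Ranking algorithm for online bipartite matching on a graph H = (U ∪ V, E) with arrival order π on U and ranking σ on V: each arriving keyword u is matched to its unmatched neighbor v minimizing σ(v), if any exists. Then the matching produced equals the matching produced by the dual process in which vertices of V arrive in order σ and each arriving v is matched to its unmatched neighbor u minimizing π(u). -/
/-- The set of right-hand vertices matched by the greedy online matching process
after the first `t` arrivals: left vertices `Fin m` arrive in index order, and each
arriving vertex is matched to its currently unmatched neighbor minimizing `rk`. -/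
noncomputable def greedyMatchedUpTo (m : ℕ) {R : Type*} [Fintype R] [DecidableEq R]
    (A : Fin m → R → Prop) [∀ t v, Decidable (A t v)] (rk : R → ℕ) : ℕ → Finset R
  | 0 => ∅
  | t + 1 =>
    let M := greedyMatchedUpTo m A rk t
    if h : t < m then
      let avail := Finset.univ.filter fun v => A ⟨t, h⟩ v ∧ v ∉ M
      if hne : avail.Nonempty then
        insert (Function.argminOn rk ↑avail (Finset.coe_nonempty.mpr hne)) M
      else M
    else M

/-- The partner assigned by the greedy online matching (Ranking) to the arriving
vertex `u`, if any. -/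
noncomputable def greedyAssign (m : ℕ) {R : Type*} [Fintype R] [DecidableEq R]
    (A : Fin m → R → Prop) [∀ t v, Decidable (A t v)] (rk : R → ℕ) (u : Fin m) :
    Option R :=
  let M := greedyMatchedUpTo m A rk u.val
  let avail := Finset.univ.filter fun v => A u v ∧ v ∉ M
  if hne : avail.Nonempty then
    some (Function.argminOn rk ↑avail (Finset.coe_nonempty.mpr hne))
  else none

/-!
Both processes output a stable matching for the preferences in which each `u` prefers neighbours
of smaller `σ`-rank and each `v` prefers neighbours of smaller arrival time: when the greedy
process leaves an edge `(u, v)` unused, either `u` received a partner it ranks at least as high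
as `v`, or `v` was taken earlier by a `u'` that `v` ranks above `u`. Since both sides rank by
global orders, there is only one stable matching; this follows by induction on the rank of `u`,
because a disagreement at `(u, v)` always produces one at a pair with a better-ranked `u`.
-/

/-- Lower rank means more preferred, on both sides. -/
structure IsStableMatching {U V : Type*} (A : U → V → Prop) (rU : U → ℕ) (rV : V → ℕ)
    (M : U → V → Prop) : Prop where
  adj_of_rel : ∀ {u v}, M u v → A u v
  leftUnique : Relator.LeftUnique M
  rightUnique : Relator.RightUnique M
  stable : ∀ {u v}, A u v → (∃ v', M u v' ∧ rV v' ≤ rV v) ∨ ∃ u', M u' v ∧ rU u' ≤ rU u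

namespace IsStableMatching

variable {U V V' : Type*} {A : U → V → Prop} {rU : U → ℕ} {rV : V → ℕ} {M M₁ M₂ : U → V → Prop}

theorem flip (h : IsStableMatching A rU rV M) :
    IsStableMatching (flip A) rV rU (flip M) where
  adj_of_rel := h.adj_of_rel
  leftUnique _ _ _ h₁ h₂ := h.rightUnique h₁ h₂
  rightUnique _ _ _ h₁ h₂ := h.leftUnique h₁ h₂
  stable hvu := (h.stable hvu).symm

theorem comap (h : IsStableMatching A rU rV M) (e : V' ≃ V) :
    IsStableMatching (fun u v => A u (e v)) rU (rV ∘ e) (fun u v => M u (e v)) where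
  adj_of_rel := h.adj_of_rel
  leftUnique _ _ _ h₁ h₂ := h.leftUnique h₁ h₂
  rightUnique _ _ _ h₁ h₂ := e.injective (h.rightUnique h₁ h₂)
  stable huv := (h.stable huv).imp
    (fun ⟨v', hv', hle⟩ => ⟨e.symm v', by simpa using hv', by simpa using hle⟩) id

theorem rel_of_rel_of_lt (hrU : rU.Injective) (hrV : rV.Injective)
    (h₁ : IsStableMatching A rU rV M₁) (h₂ : IsStableMatching A rU rV M₂) {u : U} {v : V}
    (ih : ∀ u', rU u' < rU u → ∀ v, M₁ u' v ↔ M₂ u' v) (huv : M₁ u v) : M₂ u v := by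
  rcases h₂.stable (h₁.adj_of_rel huv) with ⟨v', hv', hv'v⟩ | ⟨u', hu', hu'u⟩
  · obtain rfl | hne := eq_or_ne v' v
    · exact hv'
    exfalso
    rcases h₁.stable (h₂.adj_of_rel hv') with ⟨v'', hv'', hv''v'⟩ | ⟨u', hu', hu'u⟩
    · obtain rfl := h₁.rightUnique huv hv''
      exact hne (hrV (le_antisymm hv'v hv''v'))
    · have hu'ne : u' ≠ u := fun h => hne (h₁.rightUnique (h ▸ hu') huv)
      have hlt : rU u' < rU u := hu'u.lt_of_ne (hrU.ne hu'ne)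
      exact hu'ne (h₂.leftUnique ((ih u' hlt v').1 hu') hv')
  · obtain rfl | hne := eq_or_ne u' u
    · exact hu'
    exfalso
    have hlt : rU u' < rU u := hu'u.lt_of_ne (hrU.ne hne)
    rcases h₁.stable (h₂.adj_of_rel hu') with ⟨v'', hv'', -⟩ | ⟨u'', hu'', hu''u'⟩
    · obtain rfl := h₂.rightUnique hu' ((ih u' hlt v'').1 hv'')
      exact hne (h₁.leftUnique hv'' huv)
    · obtain rfl := h₁.leftUnique huv hu''
      exact hlt.not_ge hu''u'

theorem unique (hrU : rU.Injective) (hrV : rV.Injective)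
    (h₁ : IsStableMatching A rU rV M₁) (h₂ : IsStableMatching A rU rV M₂) : M₁ = M₂ := by
  ext u v
  induction u using (measure rU).wf.induction generalizing v with
  | _ u ih =>
    exact ⟨h₁.rel_of_rel_of_lt hrU hrV h₂ ih,
      h₂.rel_of_rel_of_lt hrU hrV h₁ fun u' hu' v => (ih u' hu' v).symm⟩

end IsStableMatching

section Greedy

variable {m : ℕ} {R : Type*} [Fintype R] [DecidableEq R] {A : Fin m → R → Prop}
  [∀ t v, Decidable (A t v)] {rk : R → ℕ}

theorem adj_and_not_mem_of_greedyAssign_eq_some {u : Fin m} {v : R}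
    (huv : greedyAssign m A rk u = some v) : A u v ∧ v ∉ greedyMatchedUpTo m A rk u := by
  unfold greedyAssign at huv
  dsimp only at huv
  split_ifs at huv with hne
  cases huv
  exact (Finset.mem_filter.1 (Function.argminOn_mem rk _ (Finset.coe_nonempty.mpr hne))).2

theorem exists_greedyAssign_eq_some_le {u : Fin m} {v : R} (huv : A u v)
    (hv : v ∉ greedyMatchedUpTo m A rk u) :
    ∃ v', greedyAssign m A rk u = some v' ∧ rk v' ≤ rk v := by
  have hmem : v ∈ (Finset.univ.filter fun w => A u w ∧ w ∉ greedyMatchedUpTo m A rk u) := by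
    simp [huv, hv]
  unfold greedyAssign
  rw [dif_pos ⟨v, hmem⟩]
  exact ⟨_, rfl, Function.argminOn_le rk _ hmem⟩

theorem greedyMatchedUpTo_succ_of_lt {t : ℕ} (ht : t < m) :
    greedyMatchedUpTo m A rk (t + 1) =
      greedyMatchedUpTo m A rk t ∪ (greedyAssign m A rk ⟨t, ht⟩).toFinset := by
  rw [greedyMatchedUpTo, dif_pos ht]
  unfold greedyAssign
  dsimp only
  split_ifs <;> simp

theorem greedyMatchedUpTo_succ_of_le {t : ℕ} (ht : m ≤ t) :
    greedyMatchedUpTo m A rk (t + 1) = greedyMatchedUpTo m A rk t := by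
  rw [greedyMatchedUpTo, dif_neg ht.not_gt]

theorem mem_greedyMatchedUpTo {t : ℕ} {v : R} :
    v ∈ greedyMatchedUpTo m A rk t ↔ ∃ u : Fin m, u < t ∧ greedyAssign m A rk u = some v := by
  induction t with
  | zero => simp [greedyMatchedUpTo]
  | succ t ih =>
    rcases lt_or_ge t m with ht | ht
    · rw [greedyMatchedUpTo_succ_of_lt ht, Finset.mem_union, ih, Option.mem_toFinset,
        Option.mem_def]
      simp only [Nat.lt_succ_iff_lt_or_eq, or_and_right, exists_or, Fin.exists_iff]
      exact or_congr_right ⟨fun h => ⟨t, ht, rfl, h⟩, fun ⟨_, _, ht', h⟩ => ht' ▸ h⟩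
    · rw [greedyMatchedUpTo_succ_of_le ht, ih]
      refine exists_congr fun u => and_congr_left fun _ => ?_
      omega

theorem greedyAssign_leftUnique :
    Relator.LeftUnique fun u v => greedyAssign m A rk u = some v := by
  have not_lt {u u' : Fin m} {v : R} (hu : greedyAssign m A rk u = some v)
      (hu' : greedyAssign m A rk u' = some v) : ¬u < u' := fun hlt =>
    (adj_and_not_mem_of_greedyAssign_eq_some hu').2 (mem_greedyMatchedUpTo.2 ⟨u, hlt, hu⟩)
  intro u u' v hu hu'
  exact le_antisymm (le_of_not_gt (not_lt hu' hu)) (le_of_not_gt (not_lt hu hu'))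

theorem isStableMatching_greedyAssign :
    IsStableMatching A Fin.val rk fun u v => greedyAssign m A rk u = some v where
  adj_of_rel huv := (adj_and_not_mem_of_greedyAssign_eq_some huv).1
  leftUnique := greedyAssign_leftUnique
  rightUnique _ _ _ h₁ h₂ := Option.some_injective _ (h₁.symm.trans h₂)
  stable {u v} huv := by
    by_cases hv : v ∈ greedyMatchedUpTo m A rk u
    · obtain ⟨u', hlt, hu'⟩ := mem_greedyMatchedUpTo.1 hv
      exact .inr ⟨u', hu', hlt.le⟩
    · exact .inl (exists_greedyAssign_eq_some_le huv hv)

end Greedy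

/-- Ranking on `H` (keywords `Fin m` arriving in index order, bidders `V`
ranked by `σ`) produces exactly the same matching as the dual process in which the
bidders arrive in the order given by `σ` and each arriving bidder is matched to its
unmatched neighboring keyword minimizing the arrival order `π` (here the index order). -/
theorem stmt5 (m nV : ℕ) (A : Fin m → Fin nV → Prop) [∀ t v, Decidable (A t v)]
    (σ : Fin nV ≃ Fin nV) :
    ∀ (u : Fin m) (v : Fin nV),
      greedyAssign m A (fun v => (σ v : ℕ)) u = some v ↔
      greedyAssign nV (fun i u => A u (σ.symm i)) (fun u : Fin m => (u : ℕ)) (σ v)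
        = some u := by
  have h₁ := isStableMatching_greedyAssign (A := A) (rk := fun v => (σ v : ℕ))
  have h₂ := (isStableMatching_greedyAssign (A := fun i u => A u (σ.symm i))
    (rk := Fin.val)).flip.comap σ
  simp only [flip, Equiv.symm_apply_apply] at h₂
  have := h₁.unique Fin.val_injective (Fin.val_injective.comp σ.injective) h₂
  intro u v
  exact iff_of_eq (congrFun₂ this u v)
end

section
/- Let k, n ≥ 1 and let x_1, …, x_n be real numbers in [0,1] satisfying, for every 1 ≤ t ≤ n, the inequality 1 − x_t ≤ (1/(kn)) · Σ_{s=1}^{t} x_s. Then Σ_{s=1}^{n} x_s ≥ Σ_{s=1}^{n} (kn/(kn+1))^s = kn (1 − (1 − 1/(kn+1))^n). -/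
/-!
Write `K = kn`, `r = K/(K+1)` and `S t = ∑_{s ≤ t} x s`. Multiplying the hypothesis at `t` by `K`
and adding `K · S (t-1)` gives `(K+1) S t ≥ K (1 + S (t-1))`, i.e. `S t ≥ r (1 + S (t-1))`.
The sequence `K (1 - r^t) = ∑_{s ≤ t} r^s` satisfies this recurrence with equality, so by induction
it is a lower bound for `S t`.
-/

open Finset

theorem sum_Icc_one_pow_eq_of_mul_add_one_eq {R : Type*} [CommRing R] {r K : R}
    (hrK : r * (K + 1) = K) (m : ℕ) : ∑ s ∈ Icc 1 m, r ^ s = K * (1 - r ^ m) := by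
  induction m with
  | zero => simp
  | succ m ih =>
    rw [sum_Icc_succ_top (by omega), ih]
    linear_combination r ^ m * hrK

theorem mul_one_sub_pow_le_of_recurrence {r K : ℝ} (hr : 0 ≤ r) (hrK : r * (K + 1) = K) {a : ℕ → ℝ} {n : ℕ}
    (h0 : 0 ≤ a 0) (hstep : ∀ t < n, r * (1 + a t) ≤ a (t + 1)) :
    ∀ t ≤ n, K * (1 - r ^ t) ≤ a t := by
  intro t ht
  induction t with
  | zero => simpa using h0
  | succ t ih =>
    calc K * (1 - r ^ (t + 1)) = r * (1 + K * (1 - r ^ t)) := by linear_combination -hrK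
      _ ≤ r * (1 + a t) := by gcongr; exact ih (by omega)
      _ ≤ a (t + 1) := hstep t (by omega)

theorem div_add_one_mul_one_add_le {K S y : ℝ} (hK : 0 < K) (h : 1 - y ≤ 1 / K * (S + y)) :
    K / (K + 1) * (1 + S) ≤ S + y := by
  have h' : K * (1 - y) ≤ S + y := by
    rwa [one_div, ← div_eq_inv_mul, le_div_iff₀ hK, mul_comm] at h
  rw [div_mul_eq_mul_div, div_le_iff₀ (by linarith)]
  linarith

theorem stmt7_general (k n : ℕ) (hk : 1 ≤ k) (hn : 1 ≤ n) (x : ℕ → ℝ)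
    (hrec : ∀ t ∈ Finset.Icc 1 n,
      1 - x t ≤ (1 / ((k : ℝ) * n)) * ∑ s ∈ Finset.Icc 1 t, x s) :
    (∑ s ∈ Finset.Icc 1 n, x s ≥
        ∑ s ∈ Finset.Icc 1 n, (((k : ℝ) * n) / ((k : ℝ) * n + 1)) ^ s) ∧
    (∑ s ∈ Finset.Icc 1 n, (((k : ℝ) * n) / ((k : ℝ) * n + 1)) ^ s =
        (k : ℝ) * n * (1 - (1 - 1 / ((k : ℝ) * n + 1)) ^ n)) := by
  set K : ℝ := (k : ℝ) * n
  have hK : 0 < K := mul_pos (by exact_mod_cast hk) (by exact_mod_cast hn)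
  have hrK : K / (K + 1) * (K + 1) = K := div_mul_cancel₀ K (by positivity)
  have hstep : ∀ t < n, K / (K + 1) * (1 + ∑ s ∈ Icc 1 t, x s) ≤ ∑ s ∈ Icc 1 (t + 1), x s := by
    intro t ht
    have h := hrec (t + 1) (mem_Icc.mpr ⟨by omega, ht⟩)
    rw [sum_Icc_succ_top (by omega)] at h ⊢
    exact div_add_one_mul_one_add_le hK h
  rw [sum_Icc_one_pow_eq_of_mul_add_one_eq hrK]
  refine ⟨mul_one_sub_pow_le_of_recurrence (by positivity) hrK (by simp) hstep n le_rfl, ?_⟩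
  rw [one_sub_div (by positivity), add_sub_cancel_right]

/-- If `x 1, …, x n ∈ [0,1]` satisfy `1 - x t ≤ (1/(kn)) ∑_{s=1}^t x s`
for all `1 ≤ t ≤ n`, then `∑_{s=1}^n x s ≥ ∑_{s=1}^n (kn/(kn+1))^s = kn (1 - (1 - 1/(kn+1))^n)`. -/
theorem stmt7 (k n : ℕ) (hk : 1 ≤ k) (hn : 1 ≤ n) (x : ℕ → ℝ)
    (hx01 : ∀ t ∈ Finset.Icc 1 n, 0 ≤ x t ∧ x t ≤ 1)
    (hrec : ∀ t ∈ Finset.Icc 1 n,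
      1 - x t ≤ (1 / ((k : ℝ) * n)) * ∑ s ∈ Finset.Icc 1 t, x s) :
    (∑ s ∈ Finset.Icc 1 n, x s ≥
        ∑ s ∈ Finset.Icc 1 n, (((k : ℝ) * n) / ((k : ℝ) * n + 1)) ^ s) ∧
    (∑ s ∈ Finset.Icc 1 n, (((k : ℝ) * n) / ((k : ℝ) * n + 1)) ^ s =
        (k : ℝ) * n * (1 - (1 - 1 / ((k : ℝ) * n + 1)) ^ n)) :=
  stmt7_general k n hk hn x hrec
end

section
/- Let G = (U_G ∪ V, E_G) be a bipartite graph with a maximum matching of size OPT, and let H = (U_H ∪ V, E_H) be a left k-copy of G (each keyword of G is duplicated k times with identical neighborhoods). Then for any arrival order on U_H, the expected size of the matching produced by the Ranking algorithm on H, over a uniformly random ranking σ of V, is at least k·OPT·(1 − e^{−1/k} + o(1)) as OPT → ∞. -/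
/-- Size of the matching produced by Ranking with ranking `rk`. -/
noncomputable def greedySize (m : ℕ) {R : Type*} [Fintype R] [DecidableEq R]
    (A : Fin m → R → Prop) [∀ t v, Decidable (A t v)] (rk : R → ℕ) : ℕ :=
  (greedyMatchedUpTo m A rk m).card

namespace Ranking

open Finset Function Equiv Filter Topology

section Run

variable {m : ℕ} {R : Type*} [Fintype R] [DecidableEq R]
  (A : Fin m → R → Prop) [∀ t v, Decidable (A t v)] (rk : R → ℕ)

def available (t : ℕ) : Set R :=
  {w | ∃ h : t < m, A ⟨t, h⟩ w ∧ w ∉ greedyMatchedUpTo m A rk t}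

open Classical in
noncomputable def matchAt (t : ℕ) : Option R :=
  if h : (available A rk t).Nonempty then some (argminOn rk _ h) else none

theorem greedyMatchedUpTo_succ (t : ℕ) :
    greedyMatchedUpTo m A rk (t + 1) =
      (matchAt A rk t).elim (greedyMatchedUpTo m A rk t)
        (insert · (greedyMatchedUpTo m A rk t)) := by
  by_cases ht : t < m
  · have hav : available A rk t =
        ↑(univ.filter fun v => A ⟨t, ht⟩ v ∧ v ∉ greedyMatchedUpTo m A rk t) := by
      ext w; simp [available, ht]
    rw [greedyMatchedUpTo, matchAt]
    simp only [dif_pos ht]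
    split_ifs with h₁ h₂ h₂
    · simp only [Option.elim_some]
      congr 1
      simp_rw [hav]
    · exact absurd (hav ▸ coe_nonempty.mpr h₁) h₂
    · exact absurd (coe_nonempty.mp (hav ▸ h₂)) h₁
    · rfl
  · have hav : available A rk t = ∅ := by
      ext w; simp [available, ht]
    simp [greedyMatchedUpTo, matchAt, ht, hav]

theorem greedyMatchedUpTo_mono : Monotone (greedyMatchedUpTo m A rk) := by
  refine monotone_nat_of_le_succ fun t => ?_
  rw [greedyMatchedUpTo_succ]
  cases matchAt A rk t
  · exact le_rfl
  · exact subset_insert _ _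

variable {A rk}

theorem matchAt_spec {t : ℕ} {z : R} (hz : matchAt A rk t = some z) :
    z ∈ available A rk t ∧ ∀ w ∈ available A rk t, rk z ≤ rk w := by
  rw [matchAt] at hz
  split_ifs at hz with hne
  cases hz
  exact ⟨argminOn_mem rk _ hne, fun w hw => argminOn_le rk _ hw⟩

theorem matchAt_eq_none_iff {t : ℕ} : matchAt A rk t = none ↔ available A rk t = ∅ := by
  rw [matchAt, ← Set.not_nonempty_iff_eq_empty]
  split_ifs with hne <;> simp [hne]

theorem matchAt_eq_some_of_le (hrk : Injective rk) {t : ℕ} {z : R}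
    (hz : z ∈ available A rk t) (hle : ∀ w ∈ available A rk t, rk z ≤ rk w) :
    matchAt A rk t = some z := by
  rw [matchAt, dif_pos ⟨z, hz⟩]
  exact congrArg some (hrk (le_antisymm (argminOn_le rk _ hz) (hle _ (argminOn_mem rk _ _))))

theorem exists_matchAt_of_mem_available {t : ℕ} {w : R} (hw : w ∈ available A rk t) :
    ∃ z, matchAt A rk t = some z := by
  rw [matchAt, dif_pos ⟨w, hw⟩]
  exact ⟨_, rfl⟩

theorem greedyMatchedUpTo_succ_of_matchAt {t : ℕ} {z : R} (hz : matchAt A rk t = some z) :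
    greedyMatchedUpTo m A rk (t + 1) = insert z (greedyMatchedUpTo m A rk t) := by
  rw [greedyMatchedUpTo_succ, hz]; rfl

theorem mem_greedyMatchedUpTo_of_matchAt {t : ℕ} {z : R} (hz : matchAt A rk t = some z) :
    z ∈ greedyMatchedUpTo m A rk m :=
  greedyMatchedUpTo_mono A rk (matchAt_spec hz).1.1 <| by
    rw [greedyMatchedUpTo_succ_of_matchAt hz]; exact mem_insert_self _ _

theorem matchAt_injective {s t : ℕ} {z : R} (hs : matchAt A rk s = some z)
    (ht : matchAt A rk t = some z) : s = t := by
  have key : ∀ {s t}, matchAt A rk s = some z → matchAt A rk t = some z → ¬ s < t :=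
    fun hs ht hlt => (matchAt_spec ht).1.2.2 <| greedyMatchedUpTo_mono A rk hlt <| by
      rw [greedyMatchedUpTo_succ_of_matchAt hs]; exact mem_insert_self _ _
  exact le_antisymm (not_lt.1 (key ht hs)) (not_lt.1 (key hs ht))

theorem card_le_card_of_forall_matchAt {I : Finset (Fin m)} {S : Finset R}
    (h : ∀ s ∈ I, ∃ z ∈ S, matchAt A rk s = some z) : #I ≤ #S := by
  rw [← card_map (s := S) Embedding.some]
  refine card_le_card_of_injOn (fun s : Fin m => matchAt A rk s) (fun s hs => ?_)
    fun s hs s' hs' hss' => ?_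
  · obtain ⟨z, hz, hsz⟩ := h s hs
    simpa [hsz] using hz
  · obtain ⟨z, -, hz⟩ := h s hs
    exact Fin.ext (matchAt_injective hz (hss'.symm.trans hz))

end Run

section Deletion

variable {m : ℕ} {R : Type*} [Fintype R] [DecidableEq R]
  {A : Fin m → R → Prop} [∀ t v, Decidable (A t v)] {v : R}

theorem available_erase_subset {rk : R → ℕ} {t : ℕ}
    (h : (greedyMatchedUpTo m A rk t).erase v ⊆
      greedyMatchedUpTo m (fun s z => A s z ∧ z ≠ v) rk t) :
    available (fun s z => A s z ∧ z ≠ v) rk t ⊆ available A rk t :=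
  fun _ ⟨ht, ⟨hA, hv⟩, hw⟩ => ⟨ht, hA, fun hw' => hw (h (mem_erase.2 ⟨hv, hw'⟩))⟩

theorem erase_greedyMatchedUpTo_subset {rk : R → ℕ} (hrk : Injective rk) (t : ℕ) :
    (greedyMatchedUpTo m A rk t).erase v ⊆
      greedyMatchedUpTo m (fun s z => A s z ∧ z ≠ v) rk t := by
  induction t with
  | zero => simp [greedyMatchedUpTo]
  | succ t ih =>
    have hmono := greedyMatchedUpTo_mono (fun s z => A s z ∧ z ≠ v) rk t.le_succ
    rcases hz : matchAt A rk t with _ | z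
    · rw [greedyMatchedUpTo_succ, hz]
      exact ih.trans hmono
    rw [greedyMatchedUpTo_succ_of_matchAt hz]
    intro w hw
    obtain ⟨hwv, hw⟩ := mem_erase.1 hw
    rcases mem_insert.1 hw with rfl | hwM
    · by_cases hwM : w ∈ greedyMatchedUpTo m (fun s z => A s z ∧ z ≠ v) rk t
      · exact hmono hwM
      -- `w` is still available once `v` is deleted, and it is the best choice there too
      obtain ⟨⟨ht, hA, -⟩, hle⟩ := matchAt_spec hz
      have hw' : matchAt (fun s z => A s z ∧ z ≠ v) rk t = some w :=
        matchAt_eq_some_of_le hrk ⟨ht, ⟨hA, hwv⟩, hwM⟩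
          fun w hw => hle w (available_erase_subset ih hw)
      rw [greedyMatchedUpTo_succ_of_matchAt hw']
      exact mem_insert_self _ _
    · exact hmono (ih (mem_erase.2 ⟨hwv, hwM⟩))

theorem exists_matchAt_le_of_matchAt_erase {rk : R → ℕ} (hrk : Injective rk) {t : ℕ} {z' : R}
    (hz' : matchAt (fun s z => A s z ∧ z ≠ v) rk t = some z') :
    ∃ z, matchAt A rk t = some z ∧ rk z ≤ rk z' := by
  have hsub := available_erase_subset (erase_greedyMatchedUpTo_subset (A := A) (v := v) hrk t)
  have hz'A := hsub (matchAt_spec hz').1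
  obtain ⟨z, hz⟩ := exists_matchAt_of_mem_available hz'A
  exact ⟨z, hz, (matchAt_spec hz).2 _ hz'A⟩

variable {rk rk' : R → ℕ} (hrk' : Injective rk') (hv : v ∉ greedyMatchedUpTo m A rk m)
  (hord : ∀ a b, a ≠ v → b ≠ v → rk a ≤ rk b → rk' a ≤ rk' b)
include hrk' hv hord

theorem matchAt_erase_eq_of_greedyMatchedUpTo_eq {t : ℕ}
    (ht : greedyMatchedUpTo m (fun s z => A s z ∧ z ≠ v) rk' t = greedyMatchedUpTo m A rk t) :
    matchAt (fun s z => A s z ∧ z ≠ v) rk' t = matchAt A rk t := by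
  have hav : available (fun s z => A s z ∧ z ≠ v) rk' t = available A rk t \ {v} := by
    ext w
    simp only [available, ht, Set.mem_sdiff, Set.mem_ofPred_eq, Set.mem_singleton_iff]
    grind
  rcases hz : matchAt A rk t with _ | z
  · rw [matchAt_eq_none_iff] at hz ⊢
    rw [hav, hz, Set.empty_sdiff]
  · have hzv : z ≠ v := fun h => hv (h ▸ mem_greedyMatchedUpTo_of_matchAt hz)
    obtain ⟨hzA, hle⟩ := matchAt_spec hz
    exact matchAt_eq_some_of_le hrk' (hav ▸ ⟨hzA, hzv⟩)
      fun w hw => hord z w hzv (hav ▸ hw).2 (hle w (hav ▸ hw).1)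

theorem greedyMatchedUpTo_erase_eq (t : ℕ) :
    greedyMatchedUpTo m (fun s z => A s z ∧ z ≠ v) rk' t = greedyMatchedUpTo m A rk t := by
  induction t with
  | zero => rfl
  | succ t ih =>
    rw [greedyMatchedUpTo_succ, greedyMatchedUpTo_succ,
      matchAt_erase_eq_of_greedyMatchedUpTo_eq hrk' hv hord ih, ih]

theorem matchAt_erase_eq (t : ℕ) :
    matchAt (fun s z => A s z ∧ z ≠ v) rk' t = matchAt A rk t :=
  matchAt_erase_eq_of_greedyMatchedUpTo_eq hrk' hv hord <|
    greedyMatchedUpTo_erase_eq hrk' hv hord t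

end Deletion

section Move

def moveVal (i t x : ℕ) : ℕ :=
  if x = i then t else if x < i ∧ t ≤ x then x + 1 else if i < x ∧ x ≤ t then x - 1 else x

theorem moveVal_lt {n i t x : ℕ} (hi : i < n) (ht : t < n) (hx : x < n) : moveVal i t x < n := by
  unfold moveVal; split_ifs <;> omega

theorem moveVal_injective (i t : ℕ) : Injective (moveVal i t) := by
  intro x y h; unfold moveVal at h; split_ifs at h <;> omega

variable {n : ℕ}

/-- The permutation of `Fin n` moving `i` to `t` and keeping the order of all other elements. -/
noncomputable def moveTo (i t : Fin n) : Perm (Fin n) :=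
  Equiv.ofBijective (fun x => ⟨moveVal i t x, moveVal_lt i.isLt t.isLt x.isLt⟩)
    (Finite.injective_iff_bijective.mp fun _ _ h =>
      Fin.ext (moveVal_injective i t (congrArg Fin.val h)))

theorem moveTo_apply_self (i t : Fin n) : moveTo i t i = t :=
  Fin.ext (by simp [moveTo, moveVal])

theorem moveTo_le_moveTo_iff (i t : Fin n) {x y : Fin n} (hx : x ≠ i) (hy : y ≠ i) :
    moveTo i t x ≤ moveTo i t y ↔ x ≤ y := by
  simp only [moveTo, Equiv.ofBijective_apply, Fin.le_def, moveVal]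
  have := Fin.val_ne_of_ne hx; have := Fin.val_ne_of_ne hy
  split_ifs <;> omega

theorem le_of_moveTo_le (i t : Fin n) {x : Fin n} (hx : x ≠ i) (h : moveTo i t x ≤ t) :
    x ≤ t := by
  simp only [moveTo, Equiv.ofBijective_apply, Fin.le_def, moveVal] at h ⊢
  have := Fin.val_ne_of_ne hx
  split_ifs at h <;> omega

theorem card_filter_moveTo_mul (v t : Fin n) (P : Perm (Fin n) → Prop) [DecidablePred P] :
    #{σ : Perm (Fin n) | P (moveTo (σ v) t * σ)} =
      n * #{τ : Perm (Fin n) | τ v = t ∧ P τ} := by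
  rw [card_eq_sum_card_fiberwise (f := fun σ => σ v) (t := univ) fun _ _ => mem_univ _]
  refine (sum_congr rfl (g := fun _ => #{τ : Perm (Fin n) | τ v = t ∧ P τ})
    fun i _ => ?_).trans (by simp)
  have hinv : (moveTo i t).symm t = i :=
    (moveTo i t).symm_apply_eq.2 (moveTo_apply_self i t).symm
  refine card_nbij' (moveTo i t * ·) ((moveTo i t)⁻¹ * ·) ?_ ?_ ?_ ?_
  · intro σ hσ
    simp only [coe_filter, mem_filter, mem_univ, true_and, Set.mem_ofPred_eq] at hσ ⊢
    rw [← hσ.2]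
    exact ⟨moveTo_apply_self _ t, hσ.1⟩
  · intro τ hτ
    simp only [coe_filter, mem_filter, mem_univ, true_and, Set.mem_ofPred_eq] at hτ ⊢
    rw [Perm.mul_apply, Perm.inv_def, hτ.1, hinv, ← Perm.inv_def, mul_inv_cancel_left]
    exact ⟨hτ.2, rfl⟩
  · intro σ _; simp
  · intro τ _; simp

theorem card_filter_apply_eq_mul (v t : Fin n) :
    #{τ : Perm (Fin n) | τ v = t} * n = n.factorial := by
  have h := card_filter_moveTo_mul v t fun _ => True
  simp only [filter_true, and_true, card_univ, Fintype.card_perm, Fintype.card_fin] at h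
  rw [h, mul_comm]

end Move

section Exposure

variable {m n : ℕ}

theorem injective_rank (σ : Perm (Fin n)) : Injective fun z => (σ z : ℕ) :=
  Fin.val_injective.comp σ.injective

noncomputable def rankingMatched (A : Fin m → Fin n → Prop) [∀ s z, Decidable (A s z)]
    (σ : Perm (Fin n)) : Finset (Fin n) :=
  greedyMatchedUpTo m A (fun z => (σ z : ℕ)) m

variable {A : Fin m → Fin n → Prop} [∀ s z, Decidable (A s z)]

-- Away from `v`, the run under the moved ranking is the run with `v` deleted, and restoring `v`
-- can only improve the bidder each keyword gets.
theorem exists_matchAt_le_of_notMem_rankingMatched_moveTo (σ : Perm (Fin n)) {v : Fin n}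
    (t : Fin n) (hv : v ∉ rankingMatched A (moveTo (σ v) t * σ)) {s : Fin m} (hs : A s v) :
    ∃ z, matchAt A (fun z => (σ z : ℕ)) s = some z ∧ σ z ≤ t := by
  set τ := moveTo (σ v) t * σ
  have hvs : v ∈ available A (fun z => (τ z : ℕ)) s :=
    ⟨s.isLt, hs, fun h => hv (greedyMatchedUpTo_mono _ _ s.isLt.le h)⟩
  obtain ⟨z₀, hz₀⟩ := exists_matchAt_of_mem_available hvs
  have hne : ∀ {z : Fin n}, z ≠ v → σ z ≠ σ v := fun h => σ.injective.ne h
  have hz₀v : z₀ ≠ v := fun h => hv (h ▸ mem_greedyMatchedUpTo_of_matchAt hz₀)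
  have hz₀t : σ z₀ ≤ t := by
    refine le_of_moveTo_le (σ v) t (hne hz₀v) ?_
    calc moveTo (σ v) t (σ z₀) = τ z₀ := rfl
      _ ≤ τ v := Fin.le_def.2 ((matchAt_spec hz₀).2 v hvs)
      _ = t := moveTo_apply_self (σ v) t
  have hdel : matchAt (fun s z => A s z ∧ z ≠ v) (fun z => (σ z : ℕ)) s = some z₀ := by
    refine (matchAt_erase_eq (injective_rank σ) hv (fun a b ha hb hab => ?_) s).trans hz₀
    exact (moveTo_le_moveTo_iff (σ v) t (hne ha) (hne hb)).1 hab
  obtain ⟨z, hz, hle⟩ := exists_matchAt_le_of_matchAt_erase (injective_rank σ) hdel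
  exact ⟨z, hz, le_trans (Fin.le_def.2 hle) hz₀t⟩

end Exposure

theorem mul_one_sub_pow_le_sum_range {a : ℕ → ℝ} {K d : ℝ} (hd : 0 ≤ d) {n : ℕ}
    (h : ∀ t < n, K ≤ ∑ s ∈ range (t + 1), a s + d * a t) :
    K * (1 - (1 - 1 / (d + 1)) ^ n) ≤ ∑ s ∈ range n, a s := by
  induction n with
  | zero => simp
  | succ n ih =>
    set c := 1 / (d + 1)
    have hc : c * (d + 1) = 1 := one_div_mul_cancel (by positivity)
    have hc₀ : 0 ≤ c := by positivity
    have hc₁ : 0 ≤ 1 - c := by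
      rw [sub_nonneg, div_le_one (by positivity)]; linarith
    have hS := ih fun t ht => h t (ht.trans n.lt_succ_self)
    have hK := mul_le_mul_of_nonneg_left (h n n.lt_succ_self) hc₀
    rw [sum_range_succ] at hK ⊢
    calc K * (1 - (1 - c) ^ (n + 1)) = (1 - c) * (K * (1 - (1 - c) ^ n)) + c * K := by ring
      _ ≤ (1 - c) * ∑ s ∈ range n, a s + c * K := by gcongr
      _ ≤ ∑ s ∈ range n, a s + a n := by linear_combination hK + a n * hc

theorem one_sub_inv_pow_le_exp {k : ℝ} (hk : 0 ≤ k) {N n : ℕ} (hN : N ≤ n) :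
    (1 - 1 / (k * n + 1)) ^ n ≤ Real.exp (-(N / (k * N + 1))) := by
  have hdiv : (N : ℝ) / (k * N + 1) ≤ n / (k * n + 1) := by
    have hNn : (N : ℝ) ≤ n := by exact_mod_cast hN
    rw [div_le_div_iff₀ (by positivity) (by positivity)]
    nlinarith
  calc (1 - 1 / (k * n + 1)) ^ n ≤ Real.exp (-(1 / (k * n + 1))) ^ n := by
        gcongr
        · rw [sub_nonneg, div_le_one (by positivity)]; nlinarith [n.cast_nonneg (α := ℝ)]
        · linarith [Real.add_one_le_exp (-(1 / (k * n + 1)))]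
    _ = Real.exp (-(n / (k * n + 1))) := by rw [← Real.exp_nat_mul]; ring_nf
    _ ≤ Real.exp (-(N / (k * N + 1))) := Real.exp_le_exp.2 (neg_le_neg hdiv)

theorem tendsto_natCast_div_mul_add_one {k : ℝ} (hk : 0 < k) :
    Tendsto (fun N : ℕ => (N : ℝ) / (k * N + 1)) atTop (𝓝 (1 / k)) := by
  have h := (tendsto_natCast_div_add_atTop (1 / k : ℝ)).const_mul (1 / k)
  rw [mul_one] at h
  refine h.congr fun N => ?_
  field_simp

section Expectation

theorem card_filter_lt_eq_sum {α : Type*} (s : Finset α) (g : α → ℕ) (N : ℕ) :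
    #{x ∈ s | g x < N} = ∑ j ∈ range N, #{x ∈ s | g x = j} := by
  rw [card_eq_sum_card_fiberwise (f := g) (t := range N) fun x hx =>
    mem_range.2 (mem_filter.1 hx).2]
  refine sum_congr rfl fun j hj => ?_
  rw [filter_filter]
  congr 1
  ext x
  simp only [mem_filter, and_congr_right_iff, and_iff_right_iff_imp]
  exact fun _ h => h ▸ mem_range.1 hj

variable {m n : ℕ} (A : Fin m → Fin n → Prop) [∀ s z, Decidable (A s z)]

/-- `n!` times the expected number of bidders of rank `j` matched by Ranking. -/
noncomputable def rankCount (j : ℕ) : ℕ :=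
  ∑ σ : Perm (Fin n), #{z ∈ rankingMatched A σ | (σ z : ℕ) = j}

theorem sum_card_filter_le_eq_sum_rankCount (t : Fin n) :
    ∑ σ, #{z ∈ rankingMatched A σ | σ z ≤ t} = ∑ j ∈ range (t + 1), rankCount A j := by
  simp_rw [rankCount, sum_comm (s := range _), ← card_filter_lt_eq_sum, Nat.lt_succ_iff]
  rfl

theorem sum_card_filter_eq_eq_rankCount (t : Fin n) :
    ∑ σ, #{z ∈ rankingMatched A σ | σ z = t} = rankCount A t := by
  simp_rw [rankCount, Fin.ext_iff]

theorem sum_greedySize_eq_sum_rankCount :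
    ∑ σ : Perm (Fin n), greedySize m A (fun z => (σ z : ℕ)) =
      ∑ j ∈ range n, rankCount A j := by
  simp_rw [rankCount, sum_comm (s := range _), ← card_filter_lt_eq_sum, Fin.is_lt,
    filter_true]
  rfl

end Expectation

section Copies

theorem card_filter_mem_of_card_fiber {α β : Type*} [Fintype α] [DecidableEq β] {ζ : α → β}
    {k : ℕ} (hζ : ∀ b, #{a | ζ a = b} = k) (T : Finset β) : #{a | ζ a ∈ T} = k * #T := by
  rw [card_eq_sum_card_fiberwise (f := ζ) (s := univ.filter fun a => ζ a ∈ T) (t := T)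
    fun a ha => (mem_filter.1 ha).2, mul_comm, ← smul_eq_mul, ← sum_const]
  refine sum_congr rfl fun b hb => ?_
  rw [filter_filter, ← hζ b]
  congr 1
  ext a
  simp only [mem_filter, mem_univ, true_and, and_iff_right_iff_imp]
  exact fun h => h ▸ hb

variable {mG mH n k : ℕ} {AG : Fin mG → Fin n → Prop} [∀ u z, Decidable (AG u z)]
  {ζ : Fin mH → Fin mG} {T : Finset (Fin mG)} {f : Fin mG → Fin n}

theorem mul_card_exposed_le (hζ : ∀ u, #{uH | ζ uH = u} = k) (hf : ∀ u ∈ T, AG u (f u))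
    (σ : Perm (Fin n)) (t : Fin n) :
    k * #{u ∈ T | f u ∉ rankingMatched (fun s z => AG (ζ s) z) (moveTo (σ (f u)) t * σ)} ≤
      #{z ∈ rankingMatched (fun s z => AG (ζ s) z) σ | σ z ≤ t} := by
  rw [← card_filter_mem_of_card_fiber hζ]
  refine card_le_card_of_forall_matchAt (A := fun s z => AG (ζ s) z)
    (rk := fun z => (σ z : ℕ)) fun uH huH => ?_
  obtain ⟨hu, hexp⟩ := mem_filter.1 (mem_filter.1 huH).2
  obtain ⟨z, hz, hzt⟩ := exists_matchAt_le_of_notMem_rankingMatched_moveTo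
    (A := fun s z => AG (ζ s) z) σ t hexp (hf _ hu)
  exact ⟨z, mem_filter.2 ⟨mem_greedyMatchedUpTo_of_matchAt hz, hzt⟩, hz⟩

theorem mul_card_mul_factorial_le (hζ : ∀ u, #{uH | ζ uH = u} = k)
    (hf : ∀ u ∈ T, AG u (f u)) (hinj : Set.InjOn f T) (t : Fin n) :
    k * #T * n.factorial ≤
      ∑ σ, #{z ∈ rankingMatched (fun s z => AG (ζ s) z) σ | σ z ≤ t} +
        k * n * ∑ σ, #{z ∈ rankingMatched (fun s z => AG (ζ s) z) σ | σ z = t} := by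
  set M := rankingMatched (fun s z => AG (ζ s) z)
  have hsplit : ∀ u, n.factorial =
      n * #{τ | τ (f u) = t ∧ f u ∉ M τ} + n * #{τ | τ (f u) = t ∧ f u ∈ M τ} := by
    intro u
    rw [← card_filter_apply_eq_mul (f u) t, ← mul_add, mul_comm,
      ← card_filter_add_card_filter_not (fun τ => f u ∉ M τ), filter_filter, filter_filter]
    simp only [not_not]
  have hexposed : k * ∑ u ∈ T, n * #{τ | τ (f u) = t ∧ f u ∉ M τ} ≤
      ∑ σ, #{z ∈ M σ | σ z ≤ t} := by
    simp_rw [← card_filter_moveTo_mul, card_filter]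
    rw [sum_comm, mul_sum]
    simp_rw [← card_filter]
    exact sum_le_sum fun σ _ => mul_card_exposed_le hζ hf σ t
  have hmatched :
      ∑ u ∈ T, #{τ | τ (f u) = t ∧ f u ∈ M τ} ≤ ∑ τ, #{z ∈ M τ | τ z = t} := by
    simp_rw [card_filter]
    rw [sum_comm]
    simp_rw [← card_filter]
    refine sum_le_sum fun τ _ => card_le_card_of_injOn f (fun u hu => ?_) (hinj.mono ?_)
    · simp only [coe_filter, Set.mem_ofPred_eq] at hu
      simp [hu.2.1, hu.2.2]
    · exact coe_subset.2 (filter_subset _ _)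
  calc k * #T * n.factorial = k * ∑ u ∈ T, n.factorial := by rw [sum_const, smul_eq_mul]; ring
    _ = k * ∑ u ∈ T, n * #{τ | τ (f u) = t ∧ f u ∉ M τ} +
        k * n * ∑ u ∈ T, #{τ | τ (f u) = t ∧ f u ∈ M τ} := by
      rw [sum_congr rfl fun u _ => hsplit u, sum_add_distrib]
      simp only [mul_add, mul_sum, mul_assoc]
    _ ≤ _ := add_le_add hexposed (Nat.mul_le_mul_left _ hmatched)

theorem mul_card_mul_one_sub_pow_le_average_greedySize (hζ : ∀ u, #{uH | ζ uH = u} = k)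
    (hf : ∀ u ∈ T, AG u (f u)) (hinj : Set.InjOn f T) :
    (k * #T : ℝ) * (1 - (1 - 1 / (k * n + 1)) ^ n) ≤
      (∑ σ : Perm (Fin n), (greedySize mH (fun t v => AG (ζ t) v) (fun v => (σ v : ℕ)) : ℝ)) /
        n.factorial := by
  have hfac : (0 : ℝ) < n.factorial := by exact_mod_cast n.factorial_pos
  rw [← Nat.cast_sum, sum_greedySize_eq_sum_rankCount, Nat.cast_sum, sum_div]
  refine mul_one_sub_pow_le_sum_range (by positivity) fun t ht => ?_
  have h := mul_card_mul_factorial_le hζ hf hinj ⟨t, ht⟩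
  rw [sum_card_filter_le_eq_sum_rankCount, sum_card_filter_eq_eq_rankCount] at h
  rw [← sum_div, mul_div_assoc', ← add_div, le_div_iff₀ hfac]
  exact_mod_cast h

end Copies

end Ranking

/-- for every `k ≥ 1` there is an error term `ε(OPT) → 0` (as `OPT → ∞`)
such that for every bipartite graph `G` (keywords `Fin mG`, bidders `Fin nV`) with
maximum matching size `OPT`, every left `k`-copy `H` of `G` (keywords `Fin mH` with
`ζ : Fin mH → Fin mG` having all fibers of size `k` and inherited neighborhoods, in any
arrival order), the expected size of the matching produced by Ranking on `H` over a
uniformly random ranking `σ` of the bidders is at least `k·OPT·(1 − e^{−1/k} + ε OPT)`. -/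
theorem stmt9 (k : ℕ) (hk : 1 ≤ k) :
    ∃ ε : ℕ → ℝ, Filter.Tendsto ε Filter.atTop (nhds 0) ∧
      ∀ (mG mH nV : ℕ) (AG : Fin mG → Fin nV → Prop) (_ : ∀ u v, Decidable (AG u v))
        (ζ : Fin mH → Fin mG)
        (_ : ∀ uG : Fin mG, (Finset.univ.filter fun uH => ζ uH = uG).card = k)
        (OPT : ℕ)
        (_ : IsGreatest {val : ℕ | ∃ (T : Finset (Fin mG)) (f : Fin mG → Fin nV),
            (∀ u ∈ T, AG u (f u)) ∧
            (∀ u ∈ T, ∀ u' ∈ T, u ≠ u' → f u ≠ f u') ∧ T.card = val} OPT),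
        (∑ σ : Equiv.Perm (Fin nV),
            (greedySize mH (fun t v => AG (ζ t) v) (fun v => (σ v : ℕ)) : ℝ)) /
          (Nat.factorial nV : ℝ) ≥
        (k : ℝ) * OPT * (1 - Real.exp (-(1 / (k : ℝ))) + ε OPT) := by
  have hk₀ : (0 : ℝ) < k := by exact_mod_cast hk
  refine ⟨fun N => Real.exp (-(1 / k)) - Real.exp (-(N / (k * N + 1))), ?_, ?_⟩
  · have h := ((Ranking.tendsto_natCast_div_mul_add_one hk₀).neg.rexp).const_sub
      (Real.exp (-(1 / k)))
    rwa [sub_self] at h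
  rintro mG mH nV AG _ ζ hζ OPT ⟨⟨T, f, hf, hinj, hT⟩, -⟩
  have hinj' : Set.InjOn f T := fun u hu u' hu' h => by_contra fun hne => hinj u hu u' hu' hne h
  have hOPT : OPT ≤ nV := hT ▸ by
    simpa using Finset.card_le_card_of_injOn f (fun _ _ => Finset.mem_univ _) hinj'
  calc (k : ℝ) * OPT * (1 - Real.exp (-(1 / k)) + (Real.exp (-(1 / k)) -
        Real.exp (-(OPT / (k * OPT + 1)))))
      = k * OPT * (1 - Real.exp (-(OPT / (k * OPT + 1)))) := by ring
    _ ≤ k * T.card * (1 - (1 - 1 / (k * nV + 1)) ^ nV) := by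
        rw [hT]; gcongr; exact Ranking.one_sub_inv_pow_le_exp hk₀.le hOPT
    _ ≤ _ := Ranking.mul_card_mul_one_sub_pow_le_average_greedySize hζ hf hinj'
end

section
/- Let H be a bipartite graph with a perfect matching f from keywords to bidders, arrival order π, and ranking σ. If a bidder v = f(u) is not matched by Ranking(H, π, σ), then the keyword u is matched by Ranking to some bidder whose rank in σ is strictly less than σ(v). -/
/-!
Ranking matches every keyword `u` that still has a free neighbour on arrival, and it
takes the free neighbour of least rank. If `f u` is never matched, it is in particular
free when `u` arrives, so `u` is matched to some `w` with `rk w ≤ rk (f u)`; and `w` is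
matched from then on, so `w ≠ f u` and the inequality is strict since `rk` is injective.
-/

section Ranking

variable {m : ℕ} {R : Type*} [Fintype R] [DecidableEq R]
  (A : Fin m → R → Prop) [∀ t v, Decidable (A t v)] (rk : R → ℕ)

theorem greedyMatchedUpTo_mono : Monotone (greedyMatchedUpTo m A rk) := by
  refine monotone_nat_of_le_succ fun t => ?_
  rw [greedyMatchedUpTo]
  dsimp only
  split_ifs
  · exact Finset.subset_insert _ _
  all_goals exact le_rfl

theorem greedyMatchedUpTo_succ_of_greedyAssign_eq_some {u : Fin m} {w : R}
    (h : greedyAssign m A rk u = some w) :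
    greedyMatchedUpTo m A rk (u.val + 1) = insert w (greedyMatchedUpTo m A rk u.val) := by
  rw [greedyAssign] at h
  rw [greedyMatchedUpTo, dif_pos u.isLt]
  dsimp only
  split_ifs at h ⊢ with hne
  · rw [Option.some.inj h]

theorem mem_greedyMatchedUpTo_of_greedyAssign_eq_some {u : Fin m} {w : R}
    (h : greedyAssign m A rk u = some w) : w ∈ greedyMatchedUpTo m A rk m := by
  refine greedyMatchedUpTo_mono A rk u.isLt ?_
  rw [greedyMatchedUpTo_succ_of_greedyAssign_eq_some A rk h]
  exact Finset.mem_insert_self _ _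

theorem exists_greedyAssign_eq_some_rk_le {u : Fin m} {v : R} (hadj : A u v)
    (hfree : v ∉ greedyMatchedUpTo m A rk u.val) :
    ∃ w, greedyAssign m A rk u = some w ∧ rk w ≤ rk v := by
  have hv : v ∈ Finset.univ.filter fun x => A u x ∧ x ∉ greedyMatchedUpTo m A rk u.val := by
    simp [hadj, hfree]
  rw [greedyAssign, dif_pos ⟨v, hv⟩]
  exact ⟨_, rfl, Function.argminOn_le rk _ hv⟩

end Ranking

theorem stmt10_general (m : ℕ) {V : Type*} [Fintype V] [DecidableEq V]
    (A : Fin m → V → Prop) [∀ t v, Decidable (A t v)]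
    (rk : V → ℕ) (hrk : Function.Injective rk)
    (f : Fin m → V) (hadj : ∀ u, A u (f u))
    (u : Fin m) (hunmatched : f u ∉ greedyMatchedUpTo m A rk m) :
    ∃ v' : V, greedyAssign m A rk u = some v' ∧ rk v' < rk (f u) := by
  have hfree : f u ∉ greedyMatchedUpTo m A rk u.val := fun h =>
    hunmatched (greedyMatchedUpTo_mono A rk u.isLt.le h)
  obtain ⟨w, hw, hle⟩ := exists_greedyAssign_eq_some_rk_le A rk (hadj u) hfree
  have hne : w ≠ f u := fun h =>
    hunmatched (h ▸ mem_greedyMatchedUpTo_of_greedyAssign_eq_some A rk hw)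
  exact ⟨w, hw, hle.lt_of_ne (hrk.ne hne)⟩

/-- if `f` is a perfect matching of `H` (keywords `Fin m`, bidders `V`,
ranking given by the injective rank function `rk`) and the bidder `v = f u` is left
unmatched by Ranking, then Ranking matches the keyword `u` to a bidder of strictly
smaller rank than `v`. -/
theorem stmt10 (m : ℕ) {V : Type*} [Fintype V] [DecidableEq V]
    (A : Fin m → V → Prop) [∀ t v, Decidable (A t v)]
    (rk : V → ℕ) (hrk : Function.Injective rk)
    (f : Fin m → V) (hbij : Function.Bijective f) (hadj : ∀ u, A u (f u))
    (u : Fin m) (hunmatched : f u ∉ greedyMatchedUpTo m A rk m) :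
    ∃ v' : V, greedyAssign m A rk u = some v' ∧ rk v' < rk (f u) :=
  stmt10_general m A rk hrk f hadj u hunmatched
end

section
/- Let X*_k, Y*_k satisfy X*_0 = Y*_0 = 0, X*_k = (1/2)(X*_{k−1} + Y*_{k−1}) + 1, Y*_k = (1/2)(X*_{k−1} + Y*_{k−1}), and suppose sequences X_k, Y_k satisfy X_1 ≤ 1, Y_1 ≤ 0 and for all k ≥ 2, X_k ≤ max{X_{k−1}, (1/2)(X_{k−1} + Y_{k−1}) + 1} and Y_k ≤ max{Y_{k−1}, (1/2)(X_{k−1} + Y_{k−1})}. Then X_k ≤ X*_k and Y_k ≤ Y*_k for all k ≥ 1. -/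
/-- If `X*`, `Y*` satisfy the Greedy recurrences and `X`, `Y` satisfy the
corresponding inequalities, then `X k ≤ X* k` and `Y k ≤ Y* k` for all `k ≥ 1`. -/
theorem stmt13 (Xs Ys X Y : ℕ → ℝ) (hXs0 : Xs 0 = 0) (hYs0 : Ys 0 = 0)
    (hXs : ∀ k : ℕ, 1 ≤ k → Xs k = (1 / 2) * (Xs (k - 1) + Ys (k - 1)) + 1)
    (hYs : ∀ k : ℕ, 1 ≤ k → Ys k = (1 / 2) * (Xs (k - 1) + Ys (k - 1)))
    (hX1 : X 1 ≤ 1) (hY1 : Y 1 ≤ 0)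
    (hX : ∀ k : ℕ, 2 ≤ k → X k ≤ max (X (k - 1)) ((1 / 2) * (X (k - 1) + Y (k - 1)) + 1))
    (hY : ∀ k : ℕ, 2 ≤ k → Y k ≤ max (Y (k - 1)) ((1 / 2) * (X (k - 1) + Y (k - 1)))) :
    ∀ k : ℕ, 1 ≤ k → X k ≤ Xs k ∧ Y k ≤ Ys k := by
  have hdiff : ∀ k : ℕ, 1 ≤ k → Xs k = Ys k + 1 := by
    intro k hk
    rw [hXs k hk, hYs k hk]
  intro k hk
  induction k, hk using Nat.le_induction with
  | base =>
    have h1 := hXs 1 le_rfl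
    have h2 := hYs 1 le_rfl
    simp [hXs0, hYs0] at h1 h2
    constructor
    · rw [h1]; exact hX1
    · rw [h2]; exact hY1
  | succ n hn ih =>
    obtain ⟨ihX, ihY⟩ := ih
    have hXsn : Xs (n + 1) = (1 / 2) * (Xs n + Ys n) + 1 := by
      have := hXs (n + 1) (by omega); simpa using this
    have hYsn : Ys (n + 1) = (1 / 2) * (Xs n + Ys n) := by
      have := hYs (n + 1) (by omega); simpa using this
    have hd := hdiff n hn
    have hXmono : Xs n ≤ Xs (n + 1) := by rw [hXsn, hd]; linarith
    have hYmono : Ys n ≤ Ys (n + 1) := by rw [hYsn, hd]; linarith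
    have hXn := hX (n + 1) (by omega)
    have hYn := hY (n + 1) (by omega)
    simp only [Nat.add_sub_cancel] at hXn hYn
    constructor
    · calc X (n + 1) ≤ max (X n) ((1 / 2) * (X n + Y n) + 1) := hXn
        _ ≤ Xs (n + 1) := by
          apply max_le
          · exact ihX.trans hXmono
          · rw [hXsn]; linarith
    · calc Y (n + 1) ≤ max (Y n) ((1 / 2) * (X n + Y n)) := hYn
        _ ≤ Ys (n + 1) := by
          apply max_le
          · exact ihY.trans hYmono
          · rw [hYsn]; linarith
end
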